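/- Let A ∈ 𝐒₊, f ≥ 0 a real number, and let λ be the smallest eigenvalue of A. Then the function Φ_{A,f} : [−f, ∞) → [−λ, ∞), δ ↦ H(A, f + δ), is well defined (its values lie in [−λ, ∞)), continuous, strictly monotonically increasing, and bijective from [−f, ∞) onto [−λ, ∞). -/

import Mathlib

open Matrix Set

/-- The set 𝐒₁ of positive semidefinite symmetric d×d real matrices with unit trace. -/
def S1set (d : ℕ) : Set (Matrix (Fin d) (Fin d) ℝ) :=
  {B | B.PosSemidef ∧ B.trace = 1}

/-- The value −B:A + f·(det B)^(1/d) appearing under the supremum of the Bellman operator. -/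
noncomputable def bval (d : ℕ) (A B : Matrix (Fin d) (Fin d) ℝ) (f : ℝ) : ℝ :=
  -((B * A).trace) + f * B.det ^ ((1 : ℝ) / d)

/-- The Bellman operator H(A,f) = sup_{B ∈ 𝐒₁} (−B:A + f·(det B)^(1/d)). -/
noncomputable def bellman (d : ℕ) (A : Matrix (Fin d) (Fin d) ℝ) (f : ℝ) : ℝ :=
  sSup ((fun B => bval d A B f) '' S1set d)

/-- The Monge–Ampère operator M(A,f) = (f/d)^d − det A. -/
noncomputable def MAop (d : ℕ) (A : Matrix (Fin d) (Fin d) ℝ) (f : ℝ) : ℝ :=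
  (f / d) ^ d - A.det

/-- The Hessian matrix D²φ(x) of φ : ℝ^d → ℝ at x. -/
noncomputable def hessianM (d : ℕ) (φ : (Fin d → ℝ) → ℝ) (x : Fin d → ℝ) :
    Matrix (Fin d) (Fin d) ℝ :=
  fun i j => iteratedFDeriv ℝ 2 φ x ![Pi.single i 1, Pi.single j 1]

/-! `H(A, ·)` is a supremum of affine functions `f ↦ -B:A + f (det B)^(1/d)` whose slopes lie in
`[0, 1]`, so it is convex and 1-Lipschitz. Since `B:A ≥ λ` on `𝐒₁`, with equality at the
projection onto a `λ`-eigenvector, `H(A, 0) = -λ`. For `f > 0` the value exceeds `-λ`: moving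
weight `u^d` of that projection onto each other eigenvector raises `B:A` only by `O(u^d)`, while
`(det B)^(1/d) ≥ u^(d-1)/2`. A convex function on `[a, ∞)` lying strictly above its value at `a`
is strictly increasing and unbounded, and continuity then gives the bijection onto `[-λ, ∞)`. -/

open Filter Topology

theorem ConvexOn.strictMonoOn_Ici {f : ℝ → ℝ} {a : ℝ} (hf : ConvexOn ℝ (Ici a) f)
    (h : ∀ x, a < x → f a < f x) : StrictMonoOn f (Ici a) := by
  intro x hx y hy hxy
  rcases (mem_Ici.mp hx).eq_or_lt with rfl | hax
  · exact h y hxy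
  · exact hf.strictMonoOn self_mem_Ici hax (h x hax) ⟨hx, self_mem_Ici⟩ ⟨hy, hxy.le⟩ hxy

theorem ConvexOn.tendsto_atTop_of_lt {f : ℝ → ℝ} {a b : ℝ} (hf : ConvexOn ℝ (Ici a) f)
    (hab : a < b) (h : f a < f b) : Tendsto f atTop atTop := by
  set m := (f b - f a) / (b - a)
  have hm : 0 < m := div_pos (sub_pos.mpr h) (sub_pos.mpr hab)
  refine tendsto_atTop_mono' _ ((eventually_gt_atTop b).mono fun x hbx => ?_)
    (tendsto_atTop_add_const_right _ (f b - m * b) (tendsto_id.const_mul_atTop hm))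
  have hslope := hf.slope_mono_adjacent self_mem_Ici (mem_Ici.mpr (hab.trans hbx).le) hab hbx
  rw [le_div_iff₀ (sub_pos.mpr hbx)] at hslope
  simp only [id]
  linear_combination hslope

theorem ConvexOn.bijOn_Ici {f : ℝ → ℝ} {a : ℝ} (hf : ConvexOn ℝ (Ici a) f)
    (hc : ContinuousOn f (Ici a)) (h : ∀ x, a < x → f a < f x) :
    BijOn f (Ici a) (Ici (f a)) := by
  have hmono := hf.strictMonoOn_Ici h
  refine ⟨fun x hx => hmono.monotoneOn self_mem_Ici hx hx, hmono.injOn, fun y hy => ?_⟩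
  have htop := hf.tendsto_atTop_of_lt (lt_add_one a) (h _ (lt_add_one a))
  obtain ⟨b, hyb, hab⟩ := ((htop.eventually_ge_atTop y).and (eventually_ge_atTop a)).exists
  exact hc.surjOn_Icc self_mem_Ici hab ⟨hy, hyb⟩

namespace Matrix.IsHermitian

variable {n : Type*} [Fintype n] [DecidableEq n] {A : Matrix n n ℝ} (hA : A.IsHermitian)

noncomputable def withEigenvalues (μ : n → ℝ) : Matrix n n ℝ :=
  (hA.eigenvectorUnitary : Matrix n n ℝ) * diagonal μ * star (hA.eigenvectorUnitary : Matrix n n ℝ)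

lemma trace_mul_eq_sum_diag_mul_eigenvalues (B : Matrix n n ℝ) :
    (B * A).trace = ∑ i, (star (hA.eigenvectorUnitary : Matrix n n ℝ) * B *
      (hA.eigenvectorUnitary : Matrix n n ℝ)) i i * hA.eigenvalues i := by
  conv_lhs => rw [hA.spectral_theorem, Unitary.conjStarAlgAut_apply, ← mul_assoc, ← mul_assoc,
    trace_mul_cycle, ← mul_assoc]
  simp [trace, mul_diagonal]

lemma posSemidef_withEigenvalues {μ : n → ℝ} (hμ : 0 ≤ μ) :
    (hA.withEigenvalues μ).PosSemidef := by
  rw [withEigenvalues, star_eq_conjTranspose]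
  exact (PosSemidef.diagonal hμ).mul_mul_conjTranspose_same _

lemma trace_withEigenvalues (μ : n → ℝ) : (hA.withEigenvalues μ).trace = ∑ i, μ i := by
  rw [withEigenvalues, trace_mul_cycle, Unitary.coe_star_mul_self, one_mul, trace_diagonal]

lemma det_withEigenvalues (μ : n → ℝ) : (hA.withEigenvalues μ).det = ∏ i, μ i := by
  rw [withEigenvalues, det_mul_comm, ← mul_assoc, Unitary.coe_star_mul_self, one_mul,
    det_diagonal]

lemma trace_withEigenvalues_mul (μ : n → ℝ) :
    (hA.withEigenvalues μ * A).trace = ∑ i, μ i * hA.eigenvalues i := by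
  have hconj : star (hA.eigenvectorUnitary : Matrix n n ℝ) * hA.withEigenvalues μ *
      (hA.eigenvectorUnitary : Matrix n n ℝ) = diagonal μ := by
    rw [withEigenvalues, ← mul_assoc, ← mul_assoc, Unitary.coe_star_mul_self, one_mul, mul_assoc,
      Unitary.coe_star_mul_self, mul_one]
  simp [hA.trace_mul_eq_sum_diag_mul_eigenvalues, hconj]

lemma le_trace_mul_of_le_eigenvalues {lam : ℝ} (hlam : ∀ i, lam ≤ hA.eigenvalues i)
    {B : Matrix n n ℝ} (hB : B.PosSemidef) : lam * B.trace ≤ (B * A).trace := by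
  set U := (hA.eigenvectorUnitary : Matrix n n ℝ)
  have hU : U ∈ unitary (Matrix n n ℝ) := hA.eigenvectorUnitary.2
  have hB' : (star U * B * U).PosSemidef := by
    simpa [star_eq_conjTranspose] using hB.conjTranspose_mul_mul_same U
  have htr : B.trace = (star U * B * U).trace := by
    rw [mul_assoc, trace_mul_comm, mul_assoc, Unitary.mul_star_self_of_mem hU, mul_one]
  rw [hA.trace_mul_eq_sum_diag_mul_eigenvalues, htr, trace, Finset.mul_sum]
  exact Finset.sum_le_sum fun i _ => by
    rw [mul_comm]; exact mul_le_mul_of_nonneg_left (hlam i) hB'.diag_nonneg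

end Matrix.IsHermitian

lemma Matrix.PosSemidef.det_le_one {n : Type*} [Fintype n] [DecidableEq n] {B : Matrix n n ℝ}
    (hB : B.PosSemidef) (htr : B.trace = 1) : B.det ≤ 1 := by
  have htr' : ∑ j, hB.isHermitian.eigenvalues j = 1 := by
    simpa [hB.isHermitian.trace_eq_sum_eigenvalues] using htr
  rw [hB.isHermitian.det_eq_prod_eigenvalues]
  simp only [RCLike.ofReal_real_eq_id, id]
  refine Finset.prod_le_one (fun i _ => hB.eigenvalues_nonneg i) fun i _ => ?_
  exact htr' ▸ Finset.single_le_sum (fun j _ => hB.eigenvalues_nonneg j) (Finset.mem_univ i)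

section Simplex

variable {d : ℕ}

def spikeWeights (i : Fin d) (s : ℝ) : Fin d → ℝ :=
  fun j => s + if j = i then 1 - d * s else 0

lemma spikeWeights_nonneg (i : Fin d) {s : ℝ} (hs : 0 ≤ s) (hds : d * s ≤ 1) :
    0 ≤ spikeWeights i s := fun j => by
  simp only [Pi.zero_apply, spikeWeights]; split_ifs <;> linarith

lemma sum_spikeWeights (i : Fin d) (s : ℝ) : ∑ j, spikeWeights i s j = 1 := by
  simp [spikeWeights, Finset.sum_add_distrib]

lemma sum_spikeWeights_mul_le (i : Fin d) {s : ℝ} (hs : 0 ≤ s) {x : Fin d → ℝ} (hx : 0 ≤ x) :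
    ∑ j, spikeWeights i s j * x j ≤ x i + s * ∑ j, x j := by
  have hsum : ∑ j, spikeWeights i s j * x j = s * ∑ j, x j + (1 - d * s) * x i := by
    simp [spikeWeights, add_mul, Finset.sum_add_distrib, Finset.mul_sum]
  have : 0 ≤ d * s * x i := mul_nonneg (by positivity) (hx i)
  linarith

lemma pow_le_prod_spikeWeights (i : Fin d) {u : ℝ} (hu : 0 ≤ u) (hdu : 2 * d * u ≤ 1) :
    (u ^ (d - 1) / 2) ^ d ≤ ∏ j, spikeWeights i (u ^ d) j := by
  have hd : 1 ≤ d := i.pos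
  have hd' : (1 : ℝ) ≤ d := by exact_mod_cast hd
  have hud : u ^ d ≤ u := pow_le_of_le_one hu (by nlinarith) (by omega)
  have hspike : (1 : ℝ) / 2 ≤ spikeWeights i (u ^ d) i := by
    simp only [spikeWeights, if_true]; nlinarith [pow_nonneg hu d]
  have hoff : ∀ j ∈ ({i}ᶜ : Finset (Fin d)), spikeWeights i (u ^ d) j = u ^ d := fun j hj => by
    simp_all [spikeWeights]
  have htwo : (2 : ℝ) ≤ 2 ^ d := by simpa using pow_le_pow_right₀ (by norm_num : (1 : ℝ) ≤ 2) hd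
  rw [Fintype.prod_eq_mul_prod_compl i, Finset.prod_congr rfl hoff, Finset.prod_const,
    Finset.card_compl, Finset.card_singleton, Fintype.card_fin, div_pow, ← pow_mul,
    mul_comm, pow_mul]
  calc (u ^ d) ^ (d - 1) / 2 ^ d ≤ (u ^ d) ^ (d - 1) / 2 := by gcongr
    _ ≤ _ := by nlinarith [pow_nonneg (pow_nonneg hu d) (d - 1)]

end Simplex

section Bellman

variable {d : ℕ} {A B : Matrix (Fin d) (Fin d) ℝ} {g : ℝ}

lemma rpow_det_le_one (hB : B ∈ S1set d) : B.det ^ ((1 : ℝ) / d) ≤ 1 :=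
  Real.rpow_le_one hB.1.det_nonneg (hB.1.det_le_one hB.2) (by positivity)

lemma bval_le_abs (hA : A.PosSemidef) (hB : B ∈ S1set d) : bval d A B g ≤ |g| := by
  have htr : 0 ≤ (B * A).trace := by
    simpa using hA.isHermitian.le_trace_mul_of_le_eigenvalues hA.eigenvalues_nonneg hB.1
  have hc := rpow_det_le_one hB
  have hc0 : 0 ≤ B.det ^ ((1 : ℝ) / d) := Real.rpow_nonneg hB.1.det_nonneg _
  unfold bval
  nlinarith [le_abs_self g, abs_nonneg g]

lemma S1set_nonempty (hd : 0 < d) : (S1set d).Nonempty :=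
  ⟨(d : ℝ)⁻¹ • 1, PosSemidef.one.smul (by positivity), by simp [hd.ne']⟩

lemma bval_le_bellman (hA : A.PosSemidef) (hB : B ∈ S1set d) : bval d A B g ≤ bellman d A g :=
  le_csSup ⟨|g|, by rintro _ ⟨B', hB', rfl⟩; exact bval_le_abs hA hB'⟩ (mem_image_of_mem _ hB)

lemma bellman_le (hd : 0 < d) {c : ℝ} (h : ∀ B ∈ S1set d, bval d A B g ≤ c) :
    bellman d A g ≤ c :=
  csSup_le ((S1set_nonempty hd).image _) (by rintro _ ⟨B, hB, rfl⟩; exact h B hB)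

lemma convexOn_bellman (hd : 0 < d) (hA : A.PosSemidef) : ConvexOn ℝ univ (bellman d A) := by
  refine ⟨convex_univ, fun x _ y _ a b ha hb hab => bellman_le hd fun B hB => ?_⟩
  have hsplit : bval d A B (a • x + b • y) = a • bval d A B x + b • bval d A B y := by
    simp only [bval, smul_eq_mul]
    linear_combination (B * A).trace * hab
  rw [hsplit]
  exact add_le_add (smul_le_smul_of_nonneg_left (bval_le_bellman hA hB) ha)
    (smul_le_smul_of_nonneg_left (bval_le_bellman hA hB) hb)

lemma lipschitzWith_bellman (hd : 0 < d) (hA : A.PosSemidef) : LipschitzWith 1 (bellman d A) := by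
  refine LipschitzWith.of_le_add fun x y => bellman_le hd fun B hB => ?_
  have hc := rpow_det_le_one hB
  have hc0 : 0 ≤ B.det ^ ((1 : ℝ) / d) := Real.rpow_nonneg hB.1.det_nonneg _
  have hB' := bval_le_bellman (g := y) hA hB
  have hxy : x - y ≤ dist x y := (le_abs_self _).trans_eq (Real.dist_eq x y).symm
  unfold bval at hB' ⊢
  nlinarith [dist_nonneg (x := x) (y := y)]

lemma neg_eigenvalue_sub_le_bellman (hA : A.PosSemidef) (i : Fin d) {s : ℝ} (hs : 0 ≤ s)
    (hds : d * s ≤ 1) (g : ℝ) :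
    -(hA.isHermitian.eigenvalues i + s * ∑ j, hA.isHermitian.eigenvalues j) +
      g * (∏ j, spikeWeights i s j) ^ ((1 : ℝ) / d) ≤ bellman d A g := by
  have hmem : hA.isHermitian.withEigenvalues (spikeWeights i s) ∈ S1set d :=
    ⟨hA.isHermitian.posSemidef_withEigenvalues (spikeWeights_nonneg i hs hds),
      by rw [IsHermitian.trace_withEigenvalues, sum_spikeWeights]⟩
  have hval := bval_le_bellman (g := g) hA hmem
  rw [bval, IsHermitian.trace_withEigenvalues_mul, IsHermitian.det_withEigenvalues] at hval
  linarith [sum_spikeWeights_mul_le i hs hA.eigenvalues_nonneg]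

lemma bellman_zero (hA : A.PosSemidef) (i : Fin d)
    (hi : ∀ j, hA.isHermitian.eigenvalues i ≤ hA.isHermitian.eigenvalues j) :
    bellman d A 0 = -hA.isHermitian.eigenvalues i := by
  refine le_antisymm (bellman_le i.pos fun B hB => ?_) ?_
  · have := hA.isHermitian.le_trace_mul_of_le_eigenvalues hi hB.1
    simp only [bval, zero_mul, add_zero, hB.2, mul_one] at this ⊢
    linarith
  · simpa using neg_eigenvalue_sub_le_bellman hA i le_rfl (by simp) 0

lemma neg_eigenvalue_lt_bellman (hA : A.PosSemidef) (i : Fin d) (hg : 0 < g) :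
    -hA.isHermitian.eigenvalues i < bellman d A g := by
  have hd : d ≠ 0 := i.pos.ne'
  set T := ∑ j, hA.isHermitian.eigenvalues j
  have hT : 0 ≤ T := Finset.sum_nonneg fun j _ => hA.eigenvalues_nonneg j
  -- `u` keeps the spike weight at `i` above 1/2 and makes the trace cost `u ^ d * T` smaller
  -- than the determinant gain `g * u ^ (d - 1) / 2`.
  set u : ℝ := min (1 / (2 * d)) (g / (4 * (T + 1)))
  have hu : 0 < u := lt_min (by positivity) (by positivity)
  have hdu : 2 * d * u ≤ 1 := by
    have := min_le_left (1 / (2 * (d : ℝ))) (g / (4 * (T + 1)))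
    rwa [le_div_iff₀ (by positivity), mul_comm] at this
  have huT : u * T < g / 2 := by
    have := min_le_right (1 / (2 * (d : ℝ))) (g / (4 * (T + 1)))
    rw [le_div_iff₀ (by positivity)] at this
    nlinarith
  have hcoeff : u ^ (d - 1) / 2 ≤ (∏ j, spikeWeights i (u ^ d) j) ^ ((1 : ℝ) / d) :=
    calc u ^ (d - 1) / 2 = ((u ^ (d - 1) / 2) ^ d) ^ ((1 : ℝ) / d) := by
          rw [one_div, Real.pow_rpow_inv_natCast (by positivity) hd]
      _ ≤ _ := Real.rpow_le_rpow (by positivity) (pow_le_prod_spikeWeights i hu.le hdu)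
          (by positivity)
  have hpenalty : u ^ d * T < g * (u ^ (d - 1) / 2) := by
    rw [← Nat.sub_add_cancel i.pos, pow_succ, Nat.add_sub_cancel]
    nlinarith [pow_pos hu (d - 1)]
  have hsd : d * u ^ d ≤ 1 := by
    have hd1 : (1 : ℝ) ≤ d := by exact_mod_cast i.pos
    nlinarith [pow_le_of_le_one hu.le (by nlinarith : u ≤ 1) hd]
  have hgain := mul_le_mul_of_nonneg_left hcoeff hg.le
  linarith [neg_eigenvalue_sub_le_bellman hA i (pow_nonneg hu.le d) hsd g]

end Bellman

theorem stmt_4_general (d : ℕ) (A : Matrix (Fin d) (Fin d) ℝ) (hA : A.PosSemidef)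
    (f : ℝ) (lam : ℝ)
    (hlam_mem : ∃ i, hA.isHermitian.eigenvalues i = lam)
    (hlam_le : ∀ i, lam ≤ hA.isHermitian.eigenvalues i) :
    (∀ δ ∈ Set.Ici (-f), bellman d A (f + δ) ∈ Set.Ici (-lam)) ∧
    ContinuousOn (fun δ => bellman d A (f + δ)) (Set.Ici (-f)) ∧
    StrictMonoOn (fun δ => bellman d A (f + δ)) (Set.Ici (-f)) ∧
    Set.BijOn (fun δ => bellman d A (f + δ)) (Set.Ici (-f)) (Set.Ici (-lam)) := by
  obtain ⟨i, rfl⟩ := hlam_mem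
  have hconv : ConvexOn ℝ (Ici (-f)) fun δ => bellman d A (f + δ) :=
    ((convexOn_bellman i.pos hA).translate_right f).subset (subset_univ _) (convex_Ici _)
  have hcont : ContinuousOn (fun δ => bellman d A (f + δ)) (Ici (-f)) :=
    ((lipschitzWith_bellman i.pos hA).continuous.comp (continuous_const_add f)).continuousOn
  have hstart : bellman d A (f + -f) = -hA.isHermitian.eigenvalues i := by
    rw [add_neg_cancel, bellman_zero hA i hlam_le]
  have hlt : ∀ δ, -f < δ → bellman d A (f + -f) < bellman d A (f + δ) := fun δ hδ =>
    hstart ▸ neg_eigenvalue_lt_bellman hA i (by linarith)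
  have hbij := hconv.bijOn_Ici hcont hlt
  rw [hstart] at hbij
  exact ⟨hbij.mapsTo, hcont, hconv.strictMonoOn_Ici hlt, hbij⟩

/-- For PSD A with smallest eigenvalue λ and f ≥ 0, the map δ ↦ H(A, f+δ) is a
continuous, strictly increasing bijection from [−f,∞) onto [−λ,∞). -/
theorem stmt_4 (d : ℕ) (hd : 2 ≤ d) (A : Matrix (Fin d) (Fin d) ℝ) (hA : A.PosSemidef)
    (f : ℝ) (hf : 0 ≤ f) (lam : ℝ)
    (hlam_mem : ∃ i, hA.isHermitian.eigenvalues i = lam)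
    (hlam_le : ∀ i, lam ≤ hA.isHermitian.eigenvalues i) :
    (∀ δ ∈ Set.Ici (-f), bellman d A (f + δ) ∈ Set.Ici (-lam)) ∧
    ContinuousOn (fun δ => bellman d A (f + δ)) (Set.Ici (-f)) ∧
    StrictMonoOn (fun δ => bellman d A (f + δ)) (Set.Ici (-f)) ∧
    Set.BijOn (fun δ => bellman d A (f + δ)) (Set.Ici (-f)) (Set.Ici (-lam)) :=
  stmt_4_general d A hA f lam hlam_mem hlam_le
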